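/- Hessian bounds for the log-likelihood ratio: Fix θ ∈ ℝ^L and y ∈ ℝ^L, and let g(φ) = log( E[exp(−‖y − Gθ‖²/(2σ²))] / E[exp(−‖y − Gφ‖²/(2σ²))] ), expectations over G Haar-distributed on 𝒢. Let H(φ) denote the Hessian of g at φ. Then for all φ, η ∈ ℝ^L: (i) ‖H(φ)‖_op ≤ σ^{−2} + 2σ^{−4}‖y‖², and (ii) ‖H(φ) − H(η)‖_op ≤ 6 σ^{−6} ‖y‖³ ‖φ − η‖. -/

import Mathlib

open MeasureTheory Real Finset

noncomputable section

/-- Euclidean norm on `Fin L → ℝ`. -/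
def nrm {L : ℕ} (v : Fin L → ℝ) : ℝ := Real.sqrt (∑ i, v i ^ 2)

/-- Euclidean inner product on `Fin L → ℝ`. -/
def dotp {L : ℕ} (v w : Fin L → ℝ) : ℝ := ∑ i, v i * w i

/-- Gaussian density with covariance `σ² I_L`, evaluated at `v ∈ ℝ^L`. -/
def gaussDens (L : ℕ) (σ : ℝ) (v : Fin L → ℝ) : ℝ :=
  (2 * Real.pi * σ ^ 2) ^ (-(L : ℝ) / 2) * Real.exp (-(nrm v) ^ 2 / (2 * σ ^ 2))

/-- Action of `g ∈ G` on `ℝ^L` through an orthogonal representation `π`. -/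
def act (L : ℕ) {G : Type} [Group G] (rep : G →* Matrix.orthogonalGroup (Fin L) ℝ)
    (g : G) (v : Fin L → ℝ) : Fin L → ℝ :=
  (rep g : Matrix (Fin L) (Fin L) ℝ).mulVec v

/-- Lebesgue density of `P_θ`: Gaussian mixture over `g ~ μ` (Haar on `𝒢`). -/
def densG (L : ℕ) {G : Type} [Group G] [MeasurableSpace G] (μ : Measure G)
    (rep : G →* Matrix.orthogonalGroup (Fin L) ℝ) (σ : ℝ) (θ y : Fin L → ℝ) : ℝ :=
  ∫ g, gaussDens L σ (y - act L rep g θ) ∂μ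

/-- The law `P_θ` of `Y = Gθ + σξ`, `G ~ μ` Haar on `𝒢`, `ξ ~ N(0, I_L)` independent. -/
def PG (L : ℕ) {G : Type} [Group G] [MeasurableSpace G] (μ : Measure G)
    (rep : G →* Matrix.orthogonalGroup (Fin L) ℝ) (σ : ℝ) (θ : Fin L → ℝ) :
    Measure (Fin L → ℝ) :=
  volume.withDensity fun y => ENNReal.ofReal (densG L μ rep σ θ y)

/-- Kullback-Leibler divergence `D(θ‖φ) = D(P_θ‖P_φ)`. -/
def KLG (L : ℕ) {G : Type} [Group G] [MeasurableSpace G] (μ : Measure G)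
    (rep : G →* Matrix.orthogonalGroup (Fin L) ℝ) (σ : ℝ) (θ φ : Fin L → ℝ) : ℝ :=
  ∫ y, Real.log (densG L μ rep σ θ y / densG L μ rep σ φ y) ∂(PG L μ rep σ θ)

/-- Orbit distance `ρ(φ, θ) = min_{G ∈ 𝒢} ‖φ - Gθ‖`. -/
def rhoG (L : ℕ) {G : Type} [Group G] (rep : G →* Matrix.orthogonalGroup (Fin L) ℝ)
    (φ θ : Fin L → ℝ) : ℝ :=
  ⨅ g : G, nrm (φ - act L rep g θ)

/-- Squared Hilbert-Schmidt norm of `Δ_m = E[(Gθ)^{⊗m}] - E[(Gφ)^{⊗m}]`. -/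
def DeltaSq (L : ℕ) {G : Type} [Group G] [MeasurableSpace G] (μ : Measure G)
    (rep : G →* Matrix.orthogonalGroup (Fin L) ℝ) (m : ℕ) (θ φ : Fin L → ℝ) : ℝ :=
  ∑ j : Fin m → Fin L,
    ((∫ g, ∏ i, act L rep g θ (j i) ∂μ) - (∫ g, ∏ i, act L rep g φ (j i) ∂μ)) ^ 2

/-- The log-likelihood ratio `g(φ) = log(f_θ(y)/f_φ(y))` as a function of `φ`, for fixed
`θ` and observation `y`. -/
def llrFun (L : ℕ) {G : Type} [Group G] [MeasurableSpace G] (μ : Measure G)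
    (rep : G →* Matrix.orthogonalGroup (Fin L) ℝ) (σ : ℝ) (θ y : Fin L → ℝ)
    (ψ : Fin L → ℝ) : ℝ :=
  Real.log ((∫ g, Real.exp (-(nrm (y - act L rep g θ)) ^ 2 / (2 * σ ^ 2)) ∂μ) /
    (∫ g, Real.exp (-(nrm (y - act L rep g ψ)) ^ 2 / (2 * σ ^ 2)) ∂μ))

/-- The Hessian quadratic form of `llrFun` at `ψ`, evaluated at direction `u`. -/
def hessQ (L : ℕ) {G : Type} [Group G] [MeasurableSpace G] (μ : Measure G)
    (rep : G →* Matrix.orthogonalGroup (Fin L) ℝ) (σ : ℝ) (θ y : Fin L → ℝ)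
    (ψ u : Fin L → ℝ) : ℝ :=
  (fderiv ℝ (fderiv ℝ (llrFun L μ rep σ θ y)) ψ) u u

set_option synthInstance.maxHeartbeats 1000000
set_option maxHeartbeats 1000000
set_option linter.unusedSectionVars false

namespace HB
variable {L : ℕ}

lemma nrm_eq (v : Fin L → ℝ) : nrm v = ‖(WithLp.equiv 2 (Fin L → ℝ)).symm v‖ := by
  rw [EuclideanSpace.norm_eq]
  simp [nrm, sq_abs]

lemma nrm_nonneg (v : Fin L → ℝ) : 0 ≤ nrm v := Real.sqrt_nonneg _

lemma dotp_eq_inner (v w : Fin L → ℝ) :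
    dotp v w = inner ℝ ((WithLp.equiv 2 (Fin L → ℝ)).symm v) ((WithLp.equiv 2 (Fin L → ℝ)).symm w) := by
  rw [EuclideanSpace.inner_eq_star_dotProduct]
  simp [dotp, dotProduct, mul_comm]

lemma abs_dotp_le (v w : Fin L → ℝ) : |dotp v w| ≤ nrm v * nrm w := by
  rw [dotp_eq_inner, nrm_eq, nrm_eq]
  exact abs_real_inner_le_norm _ _

lemma nrm_sq (v : Fin L → ℝ) : nrm v ^ 2 = dotp v v := by
  rw [nrm]; rw [Real.sq_sqrt (by positivity)]
  simp [dotp, sq]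

lemma dotp_add_right (z a b : Fin L → ℝ) : dotp z (a + b) = dotp z a + dotp z b := by
  simp [dotp, mul_add, Finset.sum_add_distrib]

lemma dotp_sub_right (z a b : Fin L → ℝ) : dotp z (a - b) = dotp z a - dotp z b := by
  simp [dotp, mul_sub, Finset.sum_sub_distrib]

lemma dotp_smul_right (z : Fin L → ℝ) (t : ℝ) (a : Fin L → ℝ) : dotp z (t • a) = t * dotp z a := by
  simp only [dotp, Finset.mul_sum, Pi.smul_apply, smul_eq_mul]
  exact Finset.sum_congr rfl fun i _ => by ring

lemma abs_apply_le_nrm (v : Fin L → ℝ) (i : Fin L) : |v i| ≤ nrm v := by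
  rw [nrm, ← Real.sqrt_sq_eq_abs]
  exact Real.sqrt_le_sqrt (Finset.single_le_sum (f := fun j => v j ^ 2)
    (fun j _ => sq_nonneg _) (mem_univ i))

/-- dot product as a continuous linear map in the second variable -/
def dotCLM (z : Fin L → ℝ) : (Fin L → ℝ) →L[ℝ] ℝ :=
  ∑ i, z i • (ContinuousLinearMap.proj i : (Fin L → ℝ) →L[ℝ] ℝ)

@[simp] lemma dotCLM_apply (z v : Fin L → ℝ) : dotCLM z v = dotp z v := by
  simp [dotCLM, dotp, ContinuousLinearMap.sum_apply]

lemma continuous_dotCLM : Continuous (dotCLM (L := L)) := by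
  apply continuous_finset_sum
  intro i _
  exact (continuous_apply i).smul continuous_const

lemma norm_dotCLM_le (z : Fin L → ℝ) : ‖dotCLM z‖ ≤ (L : ℝ) * nrm z := by
  apply ContinuousLinearMap.opNorm_le_bound _ (by have := nrm_nonneg z; positivity)
  intro v
  rw [dotCLM_apply]
  calc ‖dotp z v‖ ≤ ∑ i : Fin L, |z i| * ‖v‖ := by
        rw [dotp]
        refine (Finset.abs_sum_le_sum_abs _ _).trans (Finset.sum_le_sum fun i _ => ?_)
        rw [abs_mul]
        exact mul_le_mul_of_nonneg_left (norm_le_pi_norm v i) (abs_nonneg _)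
    _ ≤ (L : ℝ) * nrm z * ‖v‖ := by
        rw [← Finset.sum_mul]
        refine mul_le_mul_of_nonneg_right ?_ (norm_nonneg _)
        calc (∑ i : Fin L, |z i|) ≤ ∑ _i : Fin L, nrm z :=
              Finset.sum_le_sum fun i _ => abs_apply_le_nrm z i
          _ = (L : ℝ) * nrm z := by simp [Finset.sum_const, nsmul_eq_mul]

end HB

namespace HB
variable {L : ℕ}

lemma dotp_smul_left (t : ℝ) (v w : Fin L → ℝ) : dotp (t • v) w = t * dotp v w := by
  simp only [dotp, Finset.mul_sum, Pi.smul_apply, smul_eq_mul]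
  exact Finset.sum_congr rfl fun i _ => by ring

lemma dotp_sub_self (a b : Fin L → ℝ) :
    dotp (a - b) (a - b) = dotp a a - 2 * dotp a b + dotp b b := by
  have h : ∀ i, (a i - b i) * (a i - b i)
      = a i * a i - 2 * (a i * b i) + b i * b i := fun i => by ring
  simp only [dotp, Pi.sub_apply, h, Finset.sum_add_distrib, Finset.sum_sub_distrib,
    ← Finset.mul_sum]

lemma continuous_nrm : Continuous (nrm (L := L)) := by
  unfold nrm
  exact Real.continuous_sqrt.comp
    (continuous_finset_sum _ fun i _ => (continuous_apply i).pow 2)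

end HB

section Main
open HB ContinuousLinearMap
variable {L : ℕ} {G : Type} [Group G] [TopologicalSpace G] [IsTopologicalGroup G]
  [CompactSpace G] [MeasurableSpace G] [BorelSpace G]
  (μ : Measure G) [IsProbabilityMeasure μ]
  (Z : G → Fin L → ℝ)

lemma integrable_cont {F : Type*} [NormedAddCommGroup F] [SecondCountableTopology F] {f : G → F}
    (hf : Continuous f) : Integrable f μ := by
  obtain ⟨C, hC⟩ := (isCompact_univ (X := G)).exists_bound_of_continuousOn hf.continuousOn
  exact (integrable_const C).mono' hf.aestronglyMeasurable
    (Filter.Eventually.of_forall fun g => hC g trivial)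

section key
variable {F : Type*} [NormedAddCommGroup F] [NormedSpace ℝ F] [SecondCountableTopology F]

omit [Group G] [IsTopologicalGroup G] [CompactSpace G] [MeasurableSpace G] [BorelSpace G] [SecondCountableTopology F] in
lemma cont_integrand (hZc : Continuous Z) {T : G → F} (hT : Continuous T) (ψ : Fin L → ℝ) :
    Continuous fun g => rexp (dotp (Z g) ψ) • T g := by
  refine Continuous.smul (Real.continuous_exp.comp ?_) hT
  have : Continuous fun z : Fin L → ℝ => dotp z ψ := by
    simp only [dotp]
    exact continuous_finset_sum _ fun i _ => (continuous_apply i).mul continuous_const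
  exact this.comp hZc

omit [Group G] [IsTopologicalGroup G] [CompactSpace G] [MeasurableSpace G] [BorelSpace G] [SecondCountableTopology F] in
lemma cont_integrand' (hZc : Continuous Z) {T : G → F} (hT : Continuous T) (ψ : Fin L → ℝ) :
    Continuous fun g => rexp (dotp (Z g) ψ) • ((dotCLM (Z g)).smulRight (T g)) :=
  cont_integrand Z hZc (((smulRightL ℝ (Fin L → ℝ) F).continuous₂).comp
    ((continuous_dotCLM.comp hZc).prodMk hT)) ψ

/-- Key: differentiation under the integral sign. -/
lemma key (hZc : Continuous Z) {R : ℝ} (hR : ∀ g, nrm (Z g) ≤ R) {T : G → F} (hT : Continuous T) (ψ₀ : Fin L → ℝ) :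
    HasFDerivAt (fun ψ => ∫ g, rexp (dotp (Z g) ψ) • T g ∂μ)
      (∫ g, rexp (dotp (Z g) ψ₀) • ((dotCLM (Z g)).smulRight (T g)) ∂μ) ψ₀ := by
  obtain ⟨CT, hCT⟩ := (isCompact_univ (X := G)).exists_bound_of_continuousOn hT.continuousOn
  have hCT' : ∀ g, ‖T g‖ ≤ CT := fun g => hCT g trivial
  have hCT0 : 0 ≤ CT := le_trans (norm_nonneg _) (hCT' (1 : G))
  set R' := max R 0 with hR'
  have hR0 : 0 ≤ R' := le_max_right _ _
  have hRZ : ∀ g, nrm (Z g) ≤ R' := fun g => le_trans (hR g) (le_max_left _ _)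
  have hdot : ∀ g (ψ : Fin L → ℝ), ψ ∈ Metric.ball ψ₀ 1 →
      dotp (Z g) ψ ≤ R' * nrm ψ₀ + (L : ℝ) * R' := by
    intro g ψ hψ
    have h1 : dotp (Z g) ψ = dotp (Z g) ψ₀ + dotp (Z g) (ψ - ψ₀) := by
      rw [← dotp_add_right]; ring_nf
    have h2 : dotp (Z g) ψ₀ ≤ R' * nrm ψ₀ := by
      refine le_trans (le_abs_self _) ((abs_dotp_le _ _).trans ?_)
      exact mul_le_mul_of_nonneg_right (hRZ g) (nrm_nonneg _)
    have h3 : dotp (Z g) (ψ - ψ₀) ≤ (L : ℝ) * R' := by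
      have := (le_abs_self _).trans ((dotCLM_apply (Z g) (ψ - ψ₀)) ▸
        ((dotCLM (Z g)).le_opNorm (ψ - ψ₀)))
      refine this.trans ?_
      have hb : ‖ψ - ψ₀‖ ≤ 1 := by
        rw [Metric.mem_ball, dist_eq_norm] at hψ; exact hψ.le
      calc ‖dotCLM (Z g)‖ * ‖ψ - ψ₀‖ ≤ ((L : ℝ) * R') * 1 := by
            apply mul_le_mul ((norm_dotCLM_le _).trans ?_) hb (norm_nonneg _) (by positivity)
            exact mul_le_mul_of_nonneg_left (hRZ g) (Nat.cast_nonneg _)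
        _ = (L : ℝ) * R' := mul_one _
    linarith
  set B : ℝ := rexp (R' * nrm ψ₀ + (L : ℝ) * R') * ((L : ℝ) * R' * CT) with hB
  refine hasFDerivAt_integral_of_dominated_of_fderiv_le (𝕜 := ℝ)
    (F := fun ψ g => rexp (dotp (Z g) ψ) • T g)
    (F' := fun ψ g => rexp (dotp (Z g) ψ) • ((dotCLM (Z g)).smulRight (T g)))
    (bound := fun _ => B) (Metric.ball_mem_nhds ψ₀ one_pos) ?_ ?_ ?_ ?_ ?_ ?_
  · exact Filter.Eventually.of_forall fun ψ =>
      (cont_integrand Z hZc hT ψ).aestronglyMeasurable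
  · exact integrable_cont μ (cont_integrand Z hZc hT ψ₀)
  · exact (cont_integrand' Z hZc hT ψ₀).aestronglyMeasurable
  · refine Filter.Eventually.of_forall fun g ψ hψ => ?_
    show ‖rexp (dotp (Z g) ψ) • (dotCLM (Z g)).smulRight (T g)‖ ≤ B
    rw [norm_smul (rexp (dotp (Z g) ψ)) ((dotCLM (Z g)).smulRight (T g))]
    calc ‖rexp (dotp (Z g) ψ)‖ * ‖(dotCLM (Z g)).smulRight (T g)‖
        ≤ rexp (R' * nrm ψ₀ + (L : ℝ) * R') * ((L : ℝ) * R' * CT) := by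
          apply mul_le_mul
          · rw [Real.norm_eq_abs, abs_of_pos (Real.exp_pos _)]
            exact Real.exp_le_exp.2 (hdot g ψ hψ)
          · rw [ContinuousLinearMap.norm_smulRight_apply]
            apply mul_le_mul ((norm_dotCLM_le _).trans
              (mul_le_mul_of_nonneg_left (hRZ g) (Nat.cast_nonneg _))) (hCT' g)
              (norm_nonneg _) (by positivity)
          · exact norm_nonneg _
          · exact (Real.exp_pos _).le
        _ = B := rfl
  · exact integrable_const B
  · refine Filter.Eventually.of_forall fun g ψ _ => ?_
    have hd : HasFDerivAt (fun ψ : Fin L → ℝ => dotp (Z g) ψ) (dotCLM (Z g)) ψ := by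
      have : (fun ψ : Fin L → ℝ => dotp (Z g) ψ) = fun ψ => dotCLM (Z g) ψ := by
        funext ψ; rw [dotCLM_apply]
      rw [this]
      exact (dotCLM (Z g)).hasFDerivAt
    have := (hd.exp).smul_const (T g)
    convert this using 1
    ext v w
    simp [ContinuousLinearMap.smulRight_apply, smul_smul, mul_comm]
end key

lemma cont_exp (hZc : Continuous Z) (ψ : Fin L → ℝ) :
    Continuous fun g => rexp (dotp (Z g) ψ) :=
  Real.continuous_exp.comp (by
    simp only [dotp]
    exact continuous_finset_sum _ fun i _ =>
      ((continuous_apply i).comp hZc).mul continuous_const)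

/-- The normalizing integral. -/
def M0 (ψ : Fin L → ℝ) : ℝ := ∫ g, rexp (dotp (Z g) ψ) ∂μ

lemma M0_pos (hZc : Continuous Z) (ψ : Fin L → ℝ) : 0 < M0 μ Z ψ := by
  have hc : Continuous fun g => dotp (Z g) ψ := by
    simp only [dotp]
    exact continuous_finset_sum _ fun i _ =>
      ((continuous_apply i).comp hZc).mul continuous_const
  obtain ⟨C, hC⟩ := (isCompact_univ (X := G)).exists_bound_of_continuousOn hc.continuousOn
  have hlow : ∀ g, rexp (-C) ≤ rexp (dotp (Z g) ψ) := by
    intro g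
    apply Real.exp_le_exp.2
    have := hC g trivial
    rw [Real.norm_eq_abs] at this
    linarith [neg_abs_le (dotp (Z g) ψ)]
  calc (0 : ℝ) < rexp (-C) := Real.exp_pos _
    _ = ∫ _g, rexp (-C) ∂μ := by simp
    _ ≤ M0 μ Z ψ :=
        integral_mono (integrable_const _) (integrable_cont μ (cont_exp Z hZc ψ)) hlow

lemma abs_int_le (hZc : Continuous Z) {W : G → ℝ} (hW : Continuous W) {C : ℝ}
    (hC : ∀ g, |W g| ≤ C) (ψ : Fin L → ℝ) :
    |∫ g, rexp (dotp (Z g) ψ) * W g ∂μ| ≤ C * M0 μ Z ψ := by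
  have he := cont_exp Z hZc ψ
  have hint : Integrable (fun g => rexp (dotp (Z g) ψ) * W g) μ :=
    integrable_cont μ (he.mul hW)
  calc |∫ g, rexp (dotp (Z g) ψ) * W g ∂μ| ≤ ∫ g, rexp (dotp (Z g) ψ) * |W g| ∂μ := by
        simpa [Real.norm_eq_abs] using
          norm_integral_le_integral_norm (fun g => rexp (dotp (Z g) ψ) * W g) (μ := μ)
    _ ≤ ∫ g, C * rexp (dotp (Z g) ψ) ∂μ := by
        refine integral_mono (integrable_cont μ (he.mul hW.abs))
          ((integrable_cont μ he).const_mul C) fun g => ?_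
        calc rexp (dotp (Z g) ψ) * |W g| ≤ rexp (dotp (Z g) ψ) * C :=
              mul_le_mul_of_nonneg_left (hC g) (Real.exp_pos _).le
          _ = C * rexp (dotp (Z g) ψ) := mul_comm _ _
    _ = C * M0 μ Z ψ := integral_const_mul C _

/-- Evaluation of the (vector-valued) derivative integrals. -/
lemma evalF {F : Type*} [NormedAddCommGroup F] [NormedSpace ℝ F] [SecondCountableTopology F]
    [CompleteSpace F] (hZc : Continuous Z) {T : G → F} (hT : Continuous T)
    (ψ v : Fin L → ℝ) :
    (∫ g, rexp (dotp (Z g) ψ) • ((dotCLM (Z g)).smulRight (T g)) ∂μ) v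
      = ∫ g, (rexp (dotp (Z g) ψ) * dotp (Z g) v) • T g ∂μ := by
  rw [ContinuousLinearMap.integral_apply (integrable_cont μ (cont_integrand' Z hZc hT ψ))]
  congr 1
  funext g
  simp [ContinuousLinearMap.smulRight_apply, dotCLM_apply, smul_smul, mul_comm]

lemma cont_dotpZ (hZc : Continuous Z) (u : Fin L → ℝ) :
    Continuous fun g => dotp (Z g) u := by
  simp only [dotp]
  exact continuous_finset_sum _ fun i _ =>
    ((continuous_apply i).comp hZc).mul continuous_const

def K1 (ψ : Fin L → ℝ) : (Fin L → ℝ) →L[ℝ] ℝ :=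
  ∫ g, rexp (dotp (Z g) ψ) • ((dotCLM (Z g)).smulRight (1 : ℝ)) ∂μ

def K2 (ψ : Fin L → ℝ) : (Fin L → ℝ) →L[ℝ] ((Fin L → ℝ) →L[ℝ] ℝ) :=
  ∫ g, rexp (dotp (Z g) ψ) •
    ((dotCLM (Z g)).smulRight ((dotCLM (Z g)).smulRight (1 : ℝ))) ∂μ

def Pf (u ψ : Fin L → ℝ) : ℝ := ∫ g, rexp (dotp (Z g) ψ) * dotp (Z g) u ∂μ

def Qf (u ψ : Fin L → ℝ) : ℝ :=
  ∫ g, rexp (dotp (Z g) ψ) * (dotp (Z g) u * dotp (Z g) u) ∂μ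

lemma cont_T1 (hZc : Continuous Z) :
    Continuous fun g => (dotCLM (Z g)).smulRight (1 : ℝ) :=
  ((ContinuousLinearMap.smulRightL ℝ (Fin L → ℝ) ℝ).continuous₂).comp
    ((continuous_dotCLM.comp hZc).prodMk continuous_const)

lemma hasFDerivAt_M0 (hZc : Continuous Z) {R : ℝ} (hR : ∀ g, nrm (Z g) ≤ R)
    (ψ : Fin L → ℝ) : HasFDerivAt (M0 μ Z) (K1 μ Z ψ) ψ := by
  have h := key μ Z hZc hR (continuous_const (y := (1:ℝ))) ψ
  simp only [smul_eq_mul, mul_one] at h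
  exact h

lemma hasFDerivAt_K1 (hZc : Continuous Z) {R : ℝ} (hR : ∀ g, nrm (Z g) ≤ R)
    (ψ : Fin L → ℝ) : HasFDerivAt (K1 μ Z) (K2 μ Z ψ) ψ :=
  key μ Z hZc hR (cont_T1 Z hZc) ψ

lemma K1_apply (hZc : Continuous Z) (ψ v : Fin L → ℝ) :
    K1 μ Z ψ v = Pf μ Z v ψ := by
  rw [K1, evalF μ Z hZc (continuous_const (y := (1:ℝ)))]
  simp only [smul_eq_mul, mul_one, Pf]

lemma K2_apply (hZc : Continuous Z) (ψ u v : Fin L → ℝ) :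
    K2 μ Z ψ u v = ∫ g, rexp (dotp (Z g) ψ) * (dotp (Z g) u * dotp (Z g) v) ∂μ := by
  rw [K2, evalF μ Z hZc (cont_T1 Z hZc)]
  have hint : Integrable
      (fun g => (rexp (dotp (Z g) ψ) * dotp (Z g) u) • ((dotCLM (Z g)).smulRight (1:ℝ))) μ :=
    integrable_cont μ (((cont_exp Z hZc ψ).mul (cont_dotpZ Z hZc u)).smul (cont_T1 Z hZc))
  rw [ContinuousLinearMap.integral_apply hint]
  congr 1
  funext g
  simp [ContinuousLinearMap.smulRight_apply, dotCLM_apply, smul_eq_mul]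
  ring

/-- derivative of the squared norm -/
def Squad : (Fin L → ℝ) →L[ℝ] ((Fin L → ℝ) →L[ℝ] ℝ) :=
  ∑ i : Fin L, ((ContinuousLinearMap.proj (R := ℝ) (φ := fun _ : Fin L => ℝ) i).smulRight
        (ContinuousLinearMap.proj (R := ℝ) (φ := fun _ : Fin L => ℝ) i)
      + (ContinuousLinearMap.proj (R := ℝ) (φ := fun _ : Fin L => ℝ) i).smulRight
        (ContinuousLinearMap.proj (R := ℝ) (φ := fun _ : Fin L => ℝ) i))

lemma Squad_apply (χ u : Fin L → ℝ) : Squad (L := L) χ u = 2 * dotp χ u := by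
  simp [Squad, ContinuousLinearMap.sum_apply, ContinuousLinearMap.smulRight_apply,
    dotp, Finset.mul_sum]
  exact Finset.sum_congr rfl fun i _ => by ring

lemma hasFDerivAt_dotp_self (χ : Fin L → ℝ) :
    HasFDerivAt (fun χ : Fin L → ℝ => dotp χ χ) (Squad (L := L) χ) χ := by
  have h : HasFDerivAt (fun χ : Fin L → ℝ => ∑ i, χ i * χ i)
      (∑ i, ((χ i • (ContinuousLinearMap.proj i : (Fin L → ℝ) →L[ℝ] ℝ))
        + (χ i • (ContinuousLinearMap.proj i : (Fin L → ℝ) →L[ℝ] ℝ)))) χ := by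
    apply HasFDerivAt.fun_sum
    intro i _
    exact (hasFDerivAt_apply i χ).mul (hasFDerivAt_apply i χ)
  have heq : (fun χ : Fin L → ℝ => dotp χ χ) = fun χ : Fin L → ℝ => ∑ i, χ i * χ i := by
    funext χ; rfl
  rw [heq]
  convert h using 1
  · rfl
  ext v w
  simp [Squad, ContinuousLinearMap.sum_apply, ContinuousLinearMap.smulRight_apply]

lemma fderiv2_eq (hZc : Continuous Z) {R : ℝ} (hR : ∀ g, nrm (Z g) ≤ R)
    {σ : ℝ} (hσ : 0 < σ) (c0 : ℝ) (ψ u : Fin L → ℝ) :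
    (fderiv ℝ (fderiv ℝ (fun χ => c0 + (2 * σ ^ 2)⁻¹ * dotp χ χ - Real.log (M0 μ Z χ))) ψ) u u
      = (σ ^ 2)⁻¹ * dotp u u
        - ((M0 μ Z ψ)⁻¹ * Qf μ Z u ψ - ((M0 μ Z ψ)⁻¹ * Pf μ Z u ψ) ^ 2) := by
  have hMpos : ∀ χ, 0 < M0 μ Z χ := M0_pos μ Z hZc
  set Φ : (Fin L → ℝ) → ((Fin L → ℝ) →L[ℝ] ℝ) :=
    fun χ => (2 * σ ^ 2)⁻¹ • Squad (L := L) χ - (M0 μ Z χ)⁻¹ • K1 μ Z χ with hΦdef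
  have hf1 : ∀ χ, HasFDerivAt
      (fun χ => c0 + (2 * σ ^ 2)⁻¹ * dotp χ χ - Real.log (M0 μ Z χ)) (Φ χ) χ := by
    intro χ
    exact (((hasFDerivAt_dotp_self χ).const_mul ((2 * σ ^ 2)⁻¹)).const_add c0).sub
      ((hasFDerivAt_M0 μ Z hZc hR χ).log (ne_of_gt (hMpos χ)))
  have hfd : fderiv ℝ (fun χ => c0 + (2 * σ ^ 2)⁻¹ * dotp χ χ - Real.log (M0 μ Z χ)) = Φ :=
    funext fun χ => (hf1 χ).fderiv
  have hinv : HasFDerivAt (fun χ => (M0 μ Z χ)⁻¹)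
      ((-(M0 μ Z ψ ^ 2)⁻¹) • K1 μ Z ψ) ψ :=
    (hasDerivAt_inv (ne_of_gt (hMpos ψ))).comp_hasFDerivAt ψ (hasFDerivAt_M0 μ Z hZc hR ψ)
  have hsmul : HasFDerivAt (fun χ => (M0 μ Z χ)⁻¹ • K1 μ Z χ)
      ((M0 μ Z ψ)⁻¹ • K2 μ Z ψ
        + ((-(M0 μ Z ψ ^ 2)⁻¹) • K1 μ Z ψ).smulRight (K1 μ Z ψ)) ψ :=
    hinv.smul (hasFDerivAt_K1 μ Z hZc hR ψ)
  have hpart1 : HasFDerivAt (fun χ => (2 * σ ^ 2)⁻¹ • Squad (L := L) χ)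
      ((2 * σ ^ 2)⁻¹ • Squad (L := L)) ψ :=
    (Squad (L := L)).hasFDerivAt.const_smul ((2 * σ ^ 2)⁻¹)
  have hΨ : HasFDerivAt Φ
      ((2 * σ ^ 2)⁻¹ • Squad (L := L)
        - ((M0 μ Z ψ)⁻¹ • K2 μ Z ψ
          + ((-(M0 μ Z ψ ^ 2)⁻¹) • K1 μ Z ψ).smulRight (K1 μ Z ψ))) ψ :=
    hpart1.sub hsmul
  rw [hfd, hΨ.fderiv]
  have hσ2 : (σ : ℝ) ^ 2 ≠ 0 := by positivity
  have hM : M0 μ Z ψ ≠ 0 := ne_of_gt (hMpos ψ)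
  simp only [ContinuousLinearMap.sub_apply, ContinuousLinearMap.add_apply,
    ContinuousLinearMap.smul_apply, ContinuousLinearMap.smulRight_apply,
    Squad_apply, K1_apply μ Z hZc, K2_apply μ Z hZc, smul_eq_mul]
  have hQ : (∫ g, rexp (dotp (Z g) ψ) * (dotp (Z g) u * dotp (Z g) u) ∂μ) = Qf μ Z u ψ := rfl
  rw [hQ]
  field_simp
  ring

def DP (u χ : Fin L → ℝ) : (Fin L → ℝ) →L[ℝ] ℝ :=
  ∫ g, rexp (dotp (Z g) χ) • ((dotCLM (Z g)).smulRight (dotp (Z g) u)) ∂μ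

def DQ (u χ : Fin L → ℝ) : (Fin L → ℝ) →L[ℝ] ℝ :=
  ∫ g, rexp (dotp (Z g) χ) •
    ((dotCLM (Z g)).smulRight (dotp (Z g) u * dotp (Z g) u)) ∂μ

lemma hasFDerivAt_Pf (hZc : Continuous Z) {R : ℝ} (hR : ∀ g, nrm (Z g) ≤ R)
    (u χ : Fin L → ℝ) : HasFDerivAt (Pf μ Z u) (DP μ Z u χ) χ := by
  have h := key μ Z hZc hR (cont_dotpZ Z hZc u) χ
  simp only [smul_eq_mul, Pf] at h
  exact h

lemma hasFDerivAt_Qf (hZc : Continuous Z) {R : ℝ} (hR : ∀ g, nrm (Z g) ≤ R)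
    (u χ : Fin L → ℝ) : HasFDerivAt (Qf μ Z u) (DQ μ Z u χ) χ := by
  have h := key μ Z hZc hR ((cont_dotpZ Z hZc u).fun_mul (cont_dotpZ Z hZc u)) χ
  simp only [smul_eq_mul, Qf] at h
  exact h

lemma DP_apply (hZc : Continuous Z) (u χ d : Fin L → ℝ) :
    DP μ Z u χ d = ∫ g, rexp (dotp (Z g) χ) * (dotp (Z g) d * dotp (Z g) u) ∂μ := by
  rw [DP, evalF μ Z hZc (cont_dotpZ Z hZc u)]
  congr 1; funext g; simp [smul_eq_mul]; ring

lemma DQ_apply (hZc : Continuous Z) (u χ d : Fin L → ℝ) :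
    DQ μ Z u χ d
      = ∫ g, rexp (dotp (Z g) χ) * (dotp (Z g) d * (dotp (Z g) u * dotp (Z g) u)) ∂μ := by
  rw [DQ, evalF μ Z hZc ((cont_dotpZ Z hZc u).fun_mul (cont_dotpZ Z hZc u))]
  congr 1; funext g; simp [smul_eq_mul]; ring

lemma K1_apply' (hZc : Continuous Z) (χ d : Fin L → ℝ) :
    K1 μ Z χ d = ∫ g, rexp (dotp (Z g) χ) * dotp (Z g) d ∂μ :=
  K1_apply μ Z hZc χ d

/-- Derivative bound for the variance-type functional. -/
lemma variance_deriv_bound (hZc : Continuous Z) {R : ℝ} (hR : ∀ g, nrm (Z g) ≤ R)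
    (hR0 : 0 ≤ R) (u d χ : Fin L → ℝ) :
    ∃ Df : (Fin L → ℝ) →L[ℝ] ℝ,
      HasFDerivAt (fun χ => (M0 μ Z χ)⁻¹ * Qf μ Z u χ
        - ((M0 μ Z χ)⁻¹ * Pf μ Z u χ) ^ 2) Df χ ∧
      |Df d| ≤ 6 * R ^ 3 * nrm u ^ 2 * nrm d := by
  have hm := M0_pos μ Z hZc χ
  have hm' : M0 μ Z χ ≠ 0 := ne_of_gt hm
  have hinv : HasFDerivAt (fun χ => (M0 μ Z χ)⁻¹)
      ((-(M0 μ Z χ ^ 2)⁻¹) • K1 μ Z χ) χ :=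
    (hasDerivAt_inv hm').comp_hasFDerivAt χ (hasFDerivAt_M0 μ Z hZc hR χ)
  have h1 : HasFDerivAt (fun χ => (M0 μ Z χ)⁻¹ * Qf μ Z u χ)
      ((M0 μ Z χ)⁻¹ • DQ μ Z u χ
        + Qf μ Z u χ • ((-(M0 μ Z χ ^ 2)⁻¹) • K1 μ Z χ)) χ :=
    hinv.mul (hasFDerivAt_Qf μ Z hZc hR u χ)
  have h2 : HasFDerivAt (fun χ => (M0 μ Z χ)⁻¹ * Pf μ Z u χ)
      ((M0 μ Z χ)⁻¹ • DP μ Z u χ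
        + Pf μ Z u χ • ((-(M0 μ Z χ ^ 2)⁻¹) • K1 μ Z χ)) χ :=
    hinv.mul (hasFDerivAt_Pf μ Z hZc hR u χ)
  have h2sq : HasFDerivAt (fun χ => ((M0 μ Z χ)⁻¹ * Pf μ Z u χ) ^ 2)
      (((M0 μ Z χ)⁻¹ * Pf μ Z u χ) • ((M0 μ Z χ)⁻¹ • DP μ Z u χ
          + Pf μ Z u χ • ((-(M0 μ Z χ ^ 2)⁻¹) • K1 μ Z χ))
        + ((M0 μ Z χ)⁻¹ * Pf μ Z u χ) • ((M0 μ Z χ)⁻¹ • DP μ Z u χ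
          + Pf μ Z u χ • ((-(M0 μ Z χ ^ 2)⁻¹) • K1 μ Z χ))) χ := by
    simpa [pow_two] using h2.fun_mul h2
  refine ⟨_, (h1.sub h2sq), ?_⟩
  -- now bound the directional derivative
  set m := M0 μ Z χ with hmdef
  set p := Pf μ Z u χ with hp
  set q := Qf μ Z u χ with hq
  set nu := nrm u with hnu
  set nd := nrm d with hnd
  have hnu0 : 0 ≤ nu := nrm_nonneg u
  have hnd0 : 0 ≤ nd := nrm_nonneg d
  -- scalar: values of the pieces
  have habs : ∀ (W : G → ℝ), Continuous W → ∀ C : ℝ, (∀ g, |W g| ≤ C) →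
      |∫ g, rexp (dotp (Z g) χ) * W g ∂μ| ≤ C * m := fun W hW C hC =>
    abs_int_le μ Z hZc hW hC χ
  have hXu : ∀ g, |dotp (Z g) u| ≤ R * nu := fun g =>
    (abs_dotp_le _ _).trans (mul_le_mul_of_nonneg_right (hR g) hnu0)
  have hXd : ∀ g, |dotp (Z g) d| ≤ R * nd := fun g =>
    (abs_dotp_le _ _).trans (mul_le_mul_of_nonneg_right (hR g) hnd0)
  have hAd : |K1 μ Z χ d| ≤ (R * nd) * m := by
    rw [K1_apply' μ Z hZc]
    exact habs _ (cont_dotpZ Z hZc d) _ hXd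
  have hBd : |DP μ Z u χ d| ≤ (R * nd * (R * nu)) * m := by
    rw [DP_apply μ Z hZc]
    refine habs _ ((cont_dotpZ Z hZc d).fun_mul (cont_dotpZ Z hZc u)) _ fun g => ?_
    rw [abs_mul]
    exact mul_le_mul (hXd g) (hXu g) (abs_nonneg _) (by positivity)
  have hCd : |DQ μ Z u χ d| ≤ (R * nd * (R * nu * (R * nu))) * m := by
    rw [DQ_apply μ Z hZc]
    refine habs _ ((cont_dotpZ Z hZc d).fun_mul
      ((cont_dotpZ Z hZc u).fun_mul (cont_dotpZ Z hZc u))) _ fun g => ?_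
    rw [abs_mul, abs_mul]
    refine mul_le_mul (hXd g) ?_ (by positivity) (by positivity)
    exact mul_le_mul (hXu g) (hXu g) (abs_nonneg _) (by positivity)
  have hPb : |p| ≤ (R * nu) * m := by
    rw [hp, Pf]
    exact habs _ (cont_dotpZ Z hZc u) _ hXu
  have hQb : |q| ≤ ((R * nu) * (R * nu)) * m := by
    rw [hq, Qf]
    refine habs _ ((cont_dotpZ Z hZc u).fun_mul (cont_dotpZ Z hZc u)) _ fun g => ?_
    rw [abs_mul]
    exact mul_le_mul (hXu g) (hXu g) (abs_nonneg _) (by positivity)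
  -- evaluate the CLM at d
  simp only [ContinuousLinearMap.sub_apply, ContinuousLinearMap.add_apply,
    ContinuousLinearMap.smul_apply, smul_eq_mul, pow_one]
  set ad := K1 μ Z χ d
  set bd := DP μ Z u χ d
  set cd := DQ μ Z u χ d
  have key1 : |m⁻¹ * cd| ≤ R ^ 3 * nu ^ 2 * nd := by
    rw [abs_mul, abs_inv, abs_of_pos hm]
    rw [inv_mul_le_iff₀ hm]
    calc |cd| ≤ (R * nd * (R * nu * (R * nu))) * m := hCd
      _ = m * (R ^ 3 * nu ^ 2 * nd) := by ring
  have key2 : |q * (-(m ^ 2)⁻¹ * ad)| ≤ R ^ 3 * nu ^ 2 * nd := by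
    rw [abs_mul, abs_mul, abs_neg, abs_inv, abs_of_pos (by positivity : (0:ℝ) < m ^ 2)]
    calc |q| * ((m ^ 2)⁻¹ * |ad|)
        ≤ ((R * nu) * (R * nu) * m) * ((m ^ 2)⁻¹ * ((R * nd) * m)) := by
          refine mul_le_mul hQb (mul_le_mul_of_nonneg_left hAd (by positivity)) ?_ ?_
          · positivity
          · positivity
      _ = R ^ 3 * nu ^ 2 * nd * (m * m * (m^2)⁻¹) := by ring
      _ = R ^ 3 * nu ^ 2 * nd := by
          rw [show m * m = m ^ 2 by ring, mul_inv_cancel₀ (by positivity), mul_one]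
  have key3 : |m⁻¹ * p| ≤ R * nu := by
    rw [abs_mul, abs_inv, abs_of_pos hm, inv_mul_le_iff₀ hm]
    calc |p| ≤ (R * nu) * m := hPb
      _ = m * (R * nu) := by ring
  have key4 : |m⁻¹ * bd| ≤ R ^ 2 * nu * nd := by
    rw [abs_mul, abs_inv, abs_of_pos hm, inv_mul_le_iff₀ hm]
    calc |bd| ≤ (R * nd * (R * nu)) * m := hBd
      _ = m * (R ^ 2 * nu * nd) := by ring
  have key5 : |p * (-(m ^ 2)⁻¹ * ad)| ≤ R ^ 2 * nu * nd := by
    rw [abs_mul, abs_mul, abs_neg, abs_inv, abs_of_pos (by positivity : (0:ℝ) < m ^ 2)]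
    calc |p| * ((m ^ 2)⁻¹ * |ad|)
        ≤ ((R * nu) * m) * ((m ^ 2)⁻¹ * ((R * nd) * m)) := by
          refine mul_le_mul hPb (mul_le_mul_of_nonneg_left hAd (by positivity)) ?_ ?_
          · positivity
          · positivity
      _ = R ^ 2 * nu * nd * (m * m * (m^2)⁻¹) := by ring
      _ = R ^ 2 * nu * nd := by
          rw [show m * m = m ^ 2 by ring, mul_inv_cancel₀ (by positivity), mul_one]
  show |m⁻¹ * cd + q * (-(m ^ 2)⁻¹ * ad)
      - ((m⁻¹ * p) * (m⁻¹ * bd + p * (-(m ^ 2)⁻¹ * ad))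
        + (m⁻¹ * p) * (m⁻¹ * bd + p * (-(m ^ 2)⁻¹ * ad)))| ≤ 6 * R ^ 3 * nu ^ 2 * nd
  set r := m⁻¹ * p
  set sv := m⁻¹ * bd + p * (-(m ^ 2)⁻¹ * ad) with hsv
  set a1 := m⁻¹ * cd
  set a2 := q * (-(m ^ 2)⁻¹ * ad)
  have hs : |sv| ≤ R ^ 2 * nu * nd + R ^ 2 * nu * nd :=
    (abs_add_le _ _).trans (add_le_add key4 key5)
  have hw : |r * sv| ≤ (R * nu) * (R ^ 2 * nu * nd + R ^ 2 * nu * nd) := by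
    rw [abs_mul]
    exact mul_le_mul key3 hs (abs_nonneg _) (by positivity)
  have t1 : |a1 + a2 - (r * sv + r * sv)| ≤ (|a1| + |a2|) + (|r * sv| + |r * sv|) :=
    (abs_sub _ _).trans (add_le_add (abs_add_le _ _) (abs_add_le _ _))
  calc |a1 + a2 - (r * sv + r * sv)| ≤ (|a1| + |a2|) + (|r * sv| + |r * sv|) := t1
    _ ≤ (R ^ 3 * nu ^ 2 * nd + R ^ 3 * nu ^ 2 * nd)
        + ((R * nu) * (R ^ 2 * nu * nd + R ^ 2 * nu * nd)
          + (R * nu) * (R ^ 2 * nu * nd + R ^ 2 * nu * nd)) :=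
      add_le_add (add_le_add key1 key2) (add_le_add hw hw)
    _ = 6 * R ^ 3 * nu ^ 2 * nd := by ring

lemma variance_lip (hZc : Continuous Z) {R : ℝ} (hR : ∀ g, nrm (Z g) ≤ R)
    (hR0 : 0 ≤ R) (u ψ η : Fin L → ℝ) :
    |((M0 μ Z ψ)⁻¹ * Qf μ Z u ψ - ((M0 μ Z ψ)⁻¹ * Pf μ Z u ψ) ^ 2)
      - ((M0 μ Z η)⁻¹ * Qf μ Z u η - ((M0 μ Z η)⁻¹ * Pf μ Z u η) ^ 2)|
      ≤ 6 * R ^ 3 * nrm u ^ 2 * nrm (ψ - η) := by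
  set d := ψ - η with hd
  set f2 : (Fin L → ℝ) → ℝ :=
    fun χ => (M0 μ Z χ)⁻¹ * Qf μ Z u χ - ((M0 μ Z χ)⁻¹ * Pf μ Z u χ) ^ 2 with hf2
  set γ : ℝ → (Fin L → ℝ) := fun t => η + t • d with hγdef
  have hγ : ∀ t : ℝ, HasDerivAt γ d t := fun t => by
    show HasDerivAt (fun t => η + t • d) d t
    simpa using ((hasDerivAt_id t).smul_const d).const_add η
  choose Df hDf hDfb using fun t : ℝ =>
    variance_deriv_bound μ Z hZc hR hR0 u d (γ t)
  have hseg := norm_image_sub_le_of_norm_deriv_le_segment'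
    (f := fun t => f2 (γ t)) (f' := fun t => Df t d)
    (fun t _ht => ((hDf t).comp_hasDerivAt t (hγ t)).hasDerivWithinAt)
    (fun t _ht => by simpa [Real.norm_eq_abs] using hDfb t)
    1 (by norm_num : (1:ℝ) ∈ Set.Icc (0:ℝ) 1)
  have hγ1 : γ 1 = ψ := by
    simp [hγdef, hd]
  have hγ0 : γ 0 = η := by simp [hγdef]
  simp only [hγ1, hγ0] at hseg
  simpa [Real.norm_eq_abs, hf2] using hseg

lemma variance_bound (hZc : Continuous Z) {R : ℝ} (hR : ∀ g, nrm (Z g) ≤ R)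
    (hR0 : 0 ≤ R) (u ψ : Fin L → ℝ) :
    |(M0 μ Z ψ)⁻¹ * Qf μ Z u ψ - ((M0 μ Z ψ)⁻¹ * Pf μ Z u ψ) ^ 2|
      ≤ 2 * R ^ 2 * nrm u ^ 2 := by
  have hm := M0_pos μ Z hZc ψ
  set m := M0 μ Z ψ with hmdef
  set nu := nrm u with hnu
  have hnu0 : 0 ≤ nu := nrm_nonneg u
  have hXu : ∀ g, |dotp (Z g) u| ≤ R * nu := fun g =>
    (abs_dotp_le _ _).trans (mul_le_mul_of_nonneg_right (hR g) hnu0)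
  have hPb : |Pf μ Z u ψ| ≤ (R * nu) * m := by
    rw [Pf]; exact abs_int_le μ Z hZc (cont_dotpZ Z hZc u) hXu ψ
  have hQb : |Qf μ Z u ψ| ≤ ((R * nu) * (R * nu)) * m := by
    rw [Qf]
    refine abs_int_le μ Z hZc ((cont_dotpZ Z hZc u).fun_mul (cont_dotpZ Z hZc u))
      (fun g => ?_) ψ
    rw [abs_mul]
    exact mul_le_mul (hXu g) (hXu g) (abs_nonneg _) (by positivity)
  have h1 : |m⁻¹ * Qf μ Z u ψ| ≤ R ^ 2 * nu ^ 2 := by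
    rw [abs_mul, abs_inv, abs_of_pos hm, inv_mul_le_iff₀ hm]
    calc |Qf μ Z u ψ| ≤ ((R * nu) * (R * nu)) * m := hQb
      _ = m * (R ^ 2 * nu ^ 2) := by ring
  have h2 : |m⁻¹ * Pf μ Z u ψ| ≤ R * nu := by
    rw [abs_mul, abs_inv, abs_of_pos hm, inv_mul_le_iff₀ hm]
    calc |Pf μ Z u ψ| ≤ (R * nu) * m := hPb
      _ = m * (R * nu) := by ring
  calc |m⁻¹ * Qf μ Z u ψ - (m⁻¹ * Pf μ Z u ψ) ^ 2|
      ≤ |m⁻¹ * Qf μ Z u ψ| + |(m⁻¹ * Pf μ Z u ψ) ^ 2| := abs_sub _ _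
    _ ≤ R ^ 2 * nu ^ 2 + R ^ 2 * nu ^ 2 := by
        refine add_le_add h1 ?_
        rw [abs_pow]
        calc |m⁻¹ * Pf μ Z u ψ| ^ 2 ≤ (R * nu) ^ 2 :=
              pow_le_pow_left₀ (abs_nonneg _) h2 2
          _ = R ^ 2 * nu ^ 2 := by ring
    _ = 2 * R ^ 2 * nu ^ 2 := by ring

lemma int_exp_pos {f : G → ℝ} (hf : Continuous f) : 0 < ∫ g, rexp (f g) ∂μ := by
  obtain ⟨C, hC⟩ := (isCompact_univ (X := G)).exists_bound_of_continuousOn hf.continuousOn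
  have hlow : ∀ g, rexp (-C) ≤ rexp (f g) := by
    intro g
    apply Real.exp_le_exp.2
    have := hC g trivial
    rw [Real.norm_eq_abs] at this
    linarith [neg_abs_le (f g)]
  calc (0 : ℝ) < rexp (-C) := Real.exp_pos _
    _ = ∫ _g, rexp (-C) ∂μ := by simp
    _ ≤ _ := integral_mono (integrable_const _)
        (integrable_cont μ (Real.continuous_exp.comp hf)) hlow

end Main

section MatrixFacts
variable {L : ℕ}
open Matrix

lemma dotp_eq_dotProduct (v w : Fin L → ℝ) : dotp v w = v ⬝ᵥ w := rfl

lemma col_ortho {M : Matrix (Fin L) (Fin L) ℝ} (h : Mᵀ * M = 1) (ψ : Fin L → ℝ) :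
    dotp (M.mulVec ψ) (M.mulVec ψ) = dotp ψ ψ := by
  rw [dotp_eq_dotProduct, dotp_eq_dotProduct]
  calc (M *ᵥ ψ) ⬝ᵥ (M *ᵥ ψ) = ((M *ᵥ ψ) ᵥ* M) ⬝ᵥ ψ := dotProduct_mulVec _ M ψ
    _ = (Mᵀ *ᵥ (M *ᵥ ψ)) ⬝ᵥ ψ := by rw [mulVec_transpose]
    _ = ((Mᵀ * M) *ᵥ ψ) ⬝ᵥ ψ := by rw [mulVec_mulVec]
    _ = ψ ⬝ᵥ ψ := by rw [h, one_mulVec]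

lemma row_ortho {M : Matrix (Fin L) (Fin L) ℝ} (h : M * Mᵀ = 1) (y : Fin L → ℝ) :
    dotp (y ᵥ* M) (y ᵥ* M) = dotp y y := by
  rw [dotp_eq_dotProduct, dotp_eq_dotProduct]
  calc (y ᵥ* M) ⬝ᵥ (y ᵥ* M) = (Mᵀ *ᵥ y) ⬝ᵥ (Mᵀ *ᵥ y) := by rw [mulVec_transpose]
    _ = ((Mᵀ *ᵥ y) ᵥ* Mᵀ) ⬝ᵥ y := dotProduct_mulVec _ _ y
    _ = ((M * Mᵀ) *ᵥ y) ⬝ᵥ y := by rw [vecMul_transpose, mulVec_mulVec]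
    _ = y ⬝ᵥ y := by rw [h, one_mulVec]

lemma orth_MMT (A : Matrix.orthogonalGroup (Fin L) ℝ) :
    (A : Matrix (Fin L) (Fin L) ℝ) * (A : Matrix (Fin L) (Fin L) ℝ)ᵀ = 1 := by
  have := (Matrix.mem_orthogonalGroup_iff (Fin L) ℝ).1 A.2
  simpa [Matrix.star_eq_conjTranspose, Matrix.conjTranspose_eq_transpose_of_trivial] using this

lemma orth_MTM (A : Matrix.orthogonalGroup (Fin L) ℝ) :
    (A : Matrix (Fin L) (Fin L) ℝ)ᵀ * (A : Matrix (Fin L) (Fin L) ℝ) = 1 := by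
  have := (Matrix.mem_orthogonalGroup_iff' (Fin L) ℝ).1 A.2
  simpa [Matrix.star_eq_conjTranspose, Matrix.conjTranspose_eq_transpose_of_trivial] using this

lemma dotp_vecMul_mulVec (y ψ : Fin L → ℝ) (M : Matrix (Fin L) (Fin L) ℝ) :
    dotp y (M.mulVec ψ) = dotp (y ᵥ* M) ψ := by
  rw [dotp_eq_dotProduct, dotp_eq_dotProduct]
  exact dotProduct_mulVec y M ψ

end MatrixFacts

open HB Matrix in
/-- **Lemma (Hessian bounds for the log-likelihood ratio).**
For the symmetric Hessian `H(ψ)` of `g(ψ) = log(f_θ(y)/f_ψ(y))`, expressed through its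
quadratic form: (i) `‖H(ψ)‖_op ≤ σ^{-2} + 2σ^{-4}‖y‖²`, and
(ii) `‖H(ψ) - H(η)‖_op ≤ 6σ^{-6}‖y‖³‖ψ - η‖`. -/
theorem hessian_bounds_loglik
    (L : ℕ) (G : Type) [Group G] [TopologicalSpace G] [IsTopologicalGroup G]
    [CompactSpace G] [MeasurableSpace G] [BorelSpace G]
    (μ : Measure G) [IsProbabilityMeasure μ] [μ.IsHaarMeasure]
    (rep : G →* Matrix.orthogonalGroup (Fin L) ℝ)
    (hrep : Continuous fun g : G => (rep g : Matrix (Fin L) (Fin L) ℝ))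
    (σ : ℝ) (hσ : 0 < σ) (θ y : Fin L → ℝ) :
    ∀ ψ η u : Fin L → ℝ,
      |hessQ L μ rep σ θ y ψ u| ≤
        ((σ ^ 2)⁻¹ + 2 * (σ ^ 4)⁻¹ * (nrm y) ^ 2) * (nrm u) ^ 2 ∧
      |hessQ L μ rep σ θ y ψ u - hessQ L μ rep σ θ y η u| ≤
        6 * (σ ^ 6)⁻¹ * (nrm y) ^ 3 * nrm (ψ - η) * (nrm u) ^ 2 := by
  intro ψ η u
  have hσ2 : (0:ℝ) < σ ^ 2 := by positivity
  have hσ2' : (σ:ℝ) ^ 2 ≠ 0 := ne_of_gt hσ2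
  set Z : G → Fin L → ℝ :=
    fun g => (σ ^ 2)⁻¹ • (y ᵥ* (rep g : Matrix (Fin L) (Fin L) ℝ)) with hZdef
  set R : ℝ := nrm y / σ ^ 2 with hRdef
  have hR0 : 0 ≤ R := div_nonneg (nrm_nonneg y) hσ2.le
  have hZc : Continuous Z := by
    apply continuous_pi
    intro j
    have : (fun g => Z g j)
        = fun g => (σ ^ 2)⁻¹ * ∑ i, y i * (rep g : Matrix (Fin L) (Fin L) ℝ) i j := by
      funext g
      simp [hZdef, Matrix.vecMul, dotProduct]
    rw [this]
    exact continuous_const.mul (continuous_finset_sum _ fun i _ =>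
      continuous_const.mul ((continuous_apply j).comp ((continuous_apply i).comp hrep)))
  have hnrmZ : ∀ g, nrm (Z g) = R := by
    intro g
    have hsq : nrm (Z g) ^ 2 = R ^ 2 := by
      rw [nrm_sq]
      simp only [hZdef]
      rw [dotp_smul_left, dotp_smul_right, row_ortho (orth_MMT (rep g)) y,
        hRdef, div_pow, ← nrm_sq y]
      rw [eq_div_iff (by positivity : ((σ:ℝ) ^ 2) ^ 2 ≠ 0)]
      field_simp
    calc nrm (Z g) = Real.sqrt (nrm (Z g) ^ 2) := (Real.sqrt_sq (nrm_nonneg _)).symm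
      _ = Real.sqrt (R ^ 2) := by rw [hsq]
      _ = R := Real.sqrt_sq hR0
  have hR : ∀ g, nrm (Z g) ≤ R := fun g => le_of_eq (hnrmZ g)
  -- kernel identity
  have hker : ∀ (χ : Fin L → ℝ) (g : G),
      rexp (-(nrm (y - act L rep g χ)) ^ 2 / (2 * σ ^ 2))
        = rexp (-(dotp y y + dotp χ χ) / (2 * σ ^ 2)) * rexp (dotp (Z g) χ) := by
    intro χ g
    rw [← Real.exp_add]
    congr 1
    have hMψ : dotp (act L rep g χ) (act L rep g χ) = dotp χ χ :=
      col_ortho (orth_MTM (rep g)) χ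
    have hyM : dotp y (act L rep g χ) = σ ^ 2 * dotp (Z g) χ := by
      rw [act, dotp_vecMul_mulVec]
      simp only [hZdef]
      rw [dotp_smul_left]
      field_simp
    have hexp : (nrm (y - act L rep g χ)) ^ 2
        = dotp y y - 2 * (σ ^ 2 * dotp (Z g) χ) + dotp χ χ := by
      rw [nrm_sq, dotp_sub_self, hyM, hMψ]
    rw [hexp]
    field_simp
    ring
  -- continuity of the full Gaussian exponent
  have hcontfull : ∀ χ : Fin L → ℝ,
      Continuous fun g => -(nrm (y - act L rep g χ)) ^ 2 / (2 * σ ^ 2) := by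
    intro χ
    have hact : Continuous fun g => act L rep g χ := by
      apply continuous_pi
      intro i
      have : (fun g => act L rep g χ i)
          = fun g => ∑ j, (rep g : Matrix (Fin L) (Fin L) ℝ) i j * χ j := by
        funext g
        simp [act, Matrix.mulVec, dotProduct]
      rw [this]
      exact continuous_finset_sum _ fun j _ =>
        ((continuous_apply j).comp ((continuous_apply i).comp hrep)).mul continuous_const
    exact (((continuous_nrm.comp (continuous_const.sub hact)).pow 2).neg).div_const _
  have hBpos : ∀ χ : Fin L → ℝ,
      0 < ∫ g, rexp (-(nrm (y - act L rep g χ)) ^ 2 / (2 * σ ^ 2)) ∂μ := fun χ =>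
    int_exp_pos μ (hcontfull χ)
  have hM0eq : ∀ χ : Fin L → ℝ,
      (∫ g, rexp (-(nrm (y - act L rep g χ)) ^ 2 / (2 * σ ^ 2)) ∂μ)
        = rexp (-(dotp y y + dotp χ χ) / (2 * σ ^ 2)) * M0 μ Z χ := by
    intro χ
    rw [M0, ← integral_const_mul]
    exact integral_congr_ae (Filter.Eventually.of_forall fun g => hker χ g)
  set c0 : ℝ := Real.log (∫ g, rexp (-(nrm (y - act L rep g θ)) ^ 2 / (2 * σ ^ 2)) ∂μ)
    + dotp y y / (2 * σ ^ 2) with hc0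
  have hllr : llrFun L μ rep σ θ y
      = fun χ => c0 + (2 * σ ^ 2)⁻¹ * dotp χ χ - Real.log (M0 μ Z χ) := by
    funext χ
    rw [llrFun]
    rw [Real.log_div (ne_of_gt (hBpos θ)) (ne_of_gt (hBpos χ))]
    rw [hM0eq χ]
    rw [Real.log_mul (Real.exp_ne_zero _) (ne_of_gt (M0_pos μ Z hZc χ)), Real.log_exp]
    rw [hc0]
    ring
  have h1 : ∀ χ : Fin L → ℝ, hessQ L μ rep σ θ y χ u
      = (σ ^ 2)⁻¹ * dotp u u
        - ((M0 μ Z χ)⁻¹ * Qf μ Z u χ - ((M0 μ Z χ)⁻¹ * Pf μ Z u χ) ^ 2) := by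
    intro χ
    rw [hessQ, hllr]
    exact fderiv2_eq μ Z hZc hR hσ c0 χ u
  have hR2 : R ^ 2 = (σ ^ 4)⁻¹ * nrm y ^ 2 := by
    rw [hRdef, div_pow]
    rw [show ((σ:ℝ) ^ 2) ^ 2 = σ ^ 4 by ring]
    ring
  have hR3 : R ^ 3 = (σ ^ 6)⁻¹ * nrm y ^ 3 := by
    rw [hRdef, div_pow]
    rw [show ((σ:ℝ) ^ 2) ^ 3 = σ ^ 6 by ring]
    ring
  have hduu : dotp u u = nrm u ^ 2 := (nrm_sq u).symm
  constructor
  · rw [h1 ψ]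
    calc |(σ ^ 2)⁻¹ * dotp u u
        - ((M0 μ Z ψ)⁻¹ * Qf μ Z u ψ - ((M0 μ Z ψ)⁻¹ * Pf μ Z u ψ) ^ 2)|
        ≤ |(σ ^ 2)⁻¹ * dotp u u|
          + |(M0 μ Z ψ)⁻¹ * Qf μ Z u ψ - ((M0 μ Z ψ)⁻¹ * Pf μ Z u ψ) ^ 2| := abs_sub _ _
      _ ≤ (σ ^ 2)⁻¹ * nrm u ^ 2 + 2 * R ^ 2 * nrm u ^ 2 := by
          refine add_le_add ?_ (variance_bound μ Z hZc hR hR0 u ψ)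
          rw [hduu, abs_of_nonneg (by positivity)]
      _ = ((σ ^ 2)⁻¹ + 2 * (σ ^ 4)⁻¹ * nrm y ^ 2) * nrm u ^ 2 := by
          rw [hR2]; ring
  · rw [h1 ψ, h1 η]
    have heq : (σ ^ 2)⁻¹ * dotp u u
        - ((M0 μ Z ψ)⁻¹ * Qf μ Z u ψ - ((M0 μ Z ψ)⁻¹ * Pf μ Z u ψ) ^ 2)
        - ((σ ^ 2)⁻¹ * dotp u u
          - ((M0 μ Z η)⁻¹ * Qf μ Z u η - ((M0 μ Z η)⁻¹ * Pf μ Z u η) ^ 2))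
        = ((M0 μ Z η)⁻¹ * Qf μ Z u η - ((M0 μ Z η)⁻¹ * Pf μ Z u η) ^ 2)
          - ((M0 μ Z ψ)⁻¹ * Qf μ Z u ψ - ((M0 μ Z ψ)⁻¹ * Pf μ Z u ψ) ^ 2) := by ring
    rw [heq, abs_sub_comm]
    calc |((M0 μ Z ψ)⁻¹ * Qf μ Z u ψ - ((M0 μ Z ψ)⁻¹ * Pf μ Z u ψ) ^ 2)
        - ((M0 μ Z η)⁻¹ * Qf μ Z u η - ((M0 μ Z η)⁻¹ * Pf μ Z u η) ^ 2)|
        ≤ 6 * R ^ 3 * nrm u ^ 2 * nrm (ψ - η) := variance_lip μ Z hZc hR hR0 u ψ η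
      _ = 6 * (σ ^ 6)⁻¹ * nrm y ^ 3 * nrm (ψ - η) * nrm u ^ 2 := by
          rw [hR3]; ring
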